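/- Let E(n) be an n-dimensional vector space over an algebraically closed field with standard flag (E(i)). Let 0 ≤ k ≤ d ≤ m ≤ n, let w ∈ S_n, and suppose U ⊂ V ⊂ E(n) are subspaces with dim U = k, dim(U ∩ E(i)) ≥ m_w(i,d) − (d−k) for all i, and dim(V ∩ E(i)) ≥ m_w(i,m) for all i. Then there exists a d-dimensional subspace U' with U ⊂ U' ⊂ V and dim(U' ∩ E(i)) ≥ m_w(i,d) for all 1 ≤ i ≤ n. -/

import Mathlib

/-- The standard flag: `stdFlag K n i` is the subspace of `Fin n → K`
spanned by the first `i` standard basis vectors, i.e. vectors supported on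
coordinates `< i`. -/
def stdFlag (K : Type*) [Field K] (n i : ℕ) : Submodule K (Fin n → K) where
  carrier := {x | ∀ j : Fin n, i ≤ (j : ℕ) → x j = 0}
  add_mem' := by
    intro a b ha hb j hj
    simp [Pi.add_apply, ha j hj, hb j hj]
  zero_mem' := by intro j hj; rfl
  smul_mem' := by
    intro c a ha j hj
    simp [Pi.smul_apply, ha j hj]

/-- `mw w i j = #{k ≤ j : w(k) ≤ i}` (positions and values are 0-indexed). -/
def mw {n : ℕ} (w : Equiv.Perm (Fin n)) (i j : ℕ) : ℕ :=
  (Finset.univ.filter (fun k : Fin n => (k : ℕ) < j ∧ ((w k : ℕ)) < i)).card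

/-!
Induct on the deficit `d - dim U`, adjoining one vector of `V` at a time. If `U` meets the bounds
with deficit `c + 1`, let `i₀` be the first index at which it fails them with deficit `c`. There
`dim (U ∩ E i₀) < m_w(i₀, d) ≤ m_w(i₀, m) ≤ dim (V ∩ E i₀)`, so some `v ∈ (V ∩ E i₀) \ U`
exists; adjoining it gains a dimension in every `E i` with `i ≥ i₀`, while for `i < i₀` nothing
had to be gained.
-/

open Module Submodule

section FlagExtension

variable {K M ι : Type*} [Field K] [AddCommGroup M] [Module K M] [LinearOrder ι]
  [WellFoundedLT ι] {E : ι → Submodule K M} {s : Set ι} {f : ι → ℕ} {U V : Submodule K M}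

lemma finrank_inf_lt_finrank_sup_span_singleton_inf [FiniteDimensional K M]
    {W : Submodule K M} {v : M} (hvU : v ∉ U) (hvW : v ∈ W) :
    finrank K ↥(U ⊓ W) < finrank K ↥((U ⊔ span K {v}) ⊓ W) :=
  finrank_lt_finrank_of_lt <| SetLike.lt_iff_le_and_exists.mpr
    ⟨inf_le_inf_right W le_sup_left, v,
      mem_inf.mpr ⟨mem_sup_right (mem_span_singleton_self v), hvW⟩,
      fun hv => hvU (mem_inf.mp hv).1⟩

lemma exists_mem_notMem_forall_mem_or_le (hE : Monotone E) (c : ℕ) (hUV : U < V)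
    (hV : ∀ i ∈ s, f i ≤ finrank K ↥(V ⊓ E i)) :
    ∃ v ∈ V, v ∉ U ∧ ∀ i ∈ s, v ∈ E i ∨ f i ≤ finrank K ↥(U ⊓ E i) + c := by
  by_cases hbad : ∃ i ∈ s, finrank K ↥(U ⊓ E i) + c < f i
  · obtain ⟨i₀, ⟨hi₀s, hi₀⟩, hmin⟩ := wellFounded_lt.has_min _ hbad
    have hlt : U ⊓ E i₀ < V ⊓ E i₀ :=
      lt_of_le_of_finrank_lt_finrank (inf_le_inf_right _ hUV.le) (by have := hV i₀ hi₀s; omega)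
    obtain ⟨v, ⟨hvV, hvE⟩, hvU⟩ := SetLike.exists_of_lt hlt
    refine ⟨v, hvV, fun hv => hvU ⟨hv, hvE⟩, fun i hi => ?_⟩
    rcases lt_or_ge i i₀ with hii₀ | hi₀i
    · exact Or.inr <| not_lt.mp fun h => hmin i ⟨hi, h⟩ hii₀
    · exact Or.inl <| hE hi₀i hvE
  · push Not at hbad
    obtain ⟨v, hvV, hvU⟩ := SetLike.exists_of_lt hUV
    exact ⟨v, hvV, hvU, fun i hi => Or.inr (hbad i hi)⟩

lemma exists_extension_succ_of_flag_bounds [FiniteDimensional K M] (hE : Monotone E) (c : ℕ)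
    (hUV : U < V) (hV : ∀ i ∈ s, f i ≤ finrank K ↥(V ⊓ E i))
    (hU : ∀ i ∈ s, f i ≤ finrank K ↥(U ⊓ E i) + (c + 1)) :
    ∃ U₁ : Submodule K M, finrank K U₁ = finrank K U + 1 ∧ U ≤ U₁ ∧ U₁ ≤ V ∧
      ∀ i ∈ s, f i ≤ finrank K ↥(U₁ ⊓ E i) + c := by
  obtain ⟨v, hvV, hvU, hv⟩ := exists_mem_notMem_forall_mem_or_le hE c hUV hV
  refine ⟨U ⊔ span K {v}, finrank_sup_span_singleton hvU, le_sup_left,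
    sup_le hUV.le ((span_singleton_le_iff_mem v V).mpr hvV), fun i hi => ?_⟩
  rcases hv i hi with hvE | hfi
  · have := finrank_inf_lt_finrank_sup_span_singleton_inf hvU hvE
    have := hU i hi
    omega
  · have := finrank_mono (inf_le_inf_right (E i) (le_sup_left : U ≤ U ⊔ span K {v}))
    omega

theorem exists_extension_of_flag_bounds [FiniteDimensional K M] (hE : Monotone E)
    (hV : ∀ i ∈ s, f i ≤ finrank K ↥(V ⊓ E i)) (c : ℕ) (hUV : U ≤ V)
    (hcV : finrank K U + c ≤ finrank K V)
    (hU : ∀ i ∈ s, f i ≤ finrank K ↥(U ⊓ E i) + c) :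
    ∃ U' : Submodule K M, finrank K U' = finrank K U + c ∧ U ≤ U' ∧ U' ≤ V ∧
      ∀ i ∈ s, f i ≤ finrank K ↥(U' ⊓ E i) := by
  induction c generalizing U with
  | zero => exact ⟨U, rfl, le_rfl, hUV, hU⟩
  | succ c ih =>
    have hUV' : U < V := lt_of_le_of_finrank_lt_finrank hUV (by omega)
    obtain ⟨U₁, hU₁, hUU₁, hU₁V, hU₁E⟩ :=
      exists_extension_succ_of_flag_bounds hE c hUV' hV hU
    obtain ⟨U', hU', hU₁U', hU'V, hU'E⟩ := ih hU₁V (by omega) hU₁E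
    exact ⟨U', by omega, hUU₁.trans hU₁U', hU'V, hU'E⟩

end FlagExtension

lemma stdFlag_mono (K : Type*) [Field K] (n : ℕ) : Monotone (stdFlag K n) :=
  fun _ _ h _ hx j hj => hx j (h.trans hj)

lemma stdFlag_self (K : Type*) [Field K] (n : ℕ) : stdFlag K n n = ⊤ :=
  eq_top_iff.mpr fun _ _ j hj => absurd j.isLt (not_lt.mpr hj)

lemma mw_mono {n : ℕ} (w : Equiv.Perm (Fin n)) (i : ℕ) : Monotone (mw w i) :=
  fun _ _ h => Finset.card_le_card <| Finset.monotone_filter_right _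
    fun _ _ hk => ⟨hk.1.trans_le h, hk.2⟩

lemma mw_self {n m : ℕ} (w : Equiv.Perm (Fin n)) (hmn : m ≤ n) : mw w n m = m := by
  simp [mw, Fin.card_filter_val_lt, hmn]

theorem stmt7_general {K : Type*} [Field K] {n : ℕ}
    (w : Equiv.Perm (Fin n)) (k d m : ℕ)
    (hkd : k ≤ d) (hdm : d ≤ m) (hmn : m ≤ n)
    (U V : Submodule K (Fin n → K)) (hUV : U ≤ V)
    (hU : Module.finrank K U = k)
    (hUin : ∀ i, 1 ≤ i → i ≤ n →
      (mw w i d : ℤ) - ((d : ℤ) - (k : ℤ))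
        ≤ (Module.finrank K ↥(U ⊓ stdFlag K n i) : ℤ))
    (hVin : ∀ i, 1 ≤ i → i ≤ n →
      mw w i m ≤ Module.finrank K ↥(V ⊓ stdFlag K n i)) :
    ∃ U' : Submodule K (Fin n → K),
      Module.finrank K U' = d ∧ U ≤ U' ∧ U' ≤ V ∧
      ∀ i, 1 ≤ i → i ≤ n →
        mw w i d ≤ Module.finrank K ↥(U' ⊓ stdFlag K n i) := by
  have hdV : d ≤ finrank K V := by
    obtain rfl | hn := n.eq_zero_or_pos
    · omega
    · have := hVin n hn le_rfl
      rw [mw_self w hmn, stdFlag_self, inf_top_eq] at this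
      omega
  obtain ⟨U', hU', hUU', hU'V, hU'E⟩ := exists_extension_of_flag_bounds (stdFlag_mono K n)
    (s := {i | 1 ≤ i ∧ i ≤ n}) (f := fun i => mw w i d)
    (fun i hi => (mw_mono w i hdm).trans (hVin i hi.1 hi.2)) (d - k) hUV (by omega)
    (fun i hi => by have := hUin i hi.1 hi.2; omega)
  exact ⟨U', by omega, hUU', hU'V, fun i h1 h2 => hU'E i ⟨h1, h2⟩⟩

/-- over an algebraically closed field, given `0 ≤ k ≤ d ≤ m ≤ n`,
`w ∈ S_n`, and subspaces `U ⊆ V` with `dim U = k`,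
`dim(U ∩ E(i)) ≥ m_w(i,d) − (d−k)` and `dim(V ∩ E(i)) ≥ m_w(i,m)` for all
`1 ≤ i ≤ n`, there is a `d`-dimensional subspace `U'` with `U ⊆ U' ⊆ V` and
`dim(U' ∩ E(i)) ≥ m_w(i,d)` for all `1 ≤ i ≤ n`. -/
theorem stmt7 {K : Type*} [Field K] [IsAlgClosed K] {n : ℕ}
    (w : Equiv.Perm (Fin n)) (k d m : ℕ)
    (hkd : k ≤ d) (hdm : d ≤ m) (hmn : m ≤ n)
    (U V : Submodule K (Fin n → K)) (hUV : U ≤ V)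
    (hU : Module.finrank K U = k)
    (hUin : ∀ i, 1 ≤ i → i ≤ n →
      (mw w i d : ℤ) - ((d : ℤ) - (k : ℤ))
        ≤ (Module.finrank K ↥(U ⊓ stdFlag K n i) : ℤ))
    (hVin : ∀ i, 1 ≤ i → i ≤ n →
      mw w i m ≤ Module.finrank K ↥(V ⊓ stdFlag K n i)) :
    ∃ U' : Submodule K (Fin n → K),
      Module.finrank K U' = d ∧ U ≤ U' ∧ U' ≤ V ∧
      ∀ i, 1 ≤ i → i ≤ n →
        mw w i d ≤ Module.finrank K ↥(U' ⊓ stdFlag K n i) :=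
  stmt7_general w k d m hkd hdm hmn U V hUV hU hUin hVin
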